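/- For every integer k ≥ 0, the real vector space {(P₁, P₂, P₃) ∈ 𝒫_{k−1}³ : x P₁ + y P₂ + z P₃ = 0} has dimension (2k³ + 3k² − 5k)/6. -/

import Mathlib

/-!
For `k = m + 1`, consider `Φ : 𝒫_m³ → 𝒫_{m+1}`, `(P₁, P₂, P₃) ↦ x P₁ + y P₂ + z P₃`; the space in
question is its kernel. The image of `Φ` is spanned by the monomials `x^s` with `0 < |s| ≤ m + 1`,
since each of them is `x_i · x^(s - e_i)` for any `i` with `s_i ≠ 0`. Counting monomials,
`dim 𝒫_N = C(N + 3, 3)` (monomials of degree `≤ N` in `n` variables correspond to multisets of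
size `N` from `n + 1` letters), and rank–nullity gives
`3 C(m + 3, 3) - (C(m + 4, 3) - 1) = (2k³ + 3k² - 5k)/6`.
-/

open MvPolynomial

noncomputable section

/-- Real polynomials in the three variables `x, y, z` (indexed `0, 1, 2`). -/
abbrev P3 := MvPolynomial (Fin 3) ℝ

/-- The space `𝒫_m` of polynomials of total degree at most `m`, with the convention
`𝒫_m = {0}` for `m < 0`. -/
def polyLE3 (m : ℤ) : Submodule ℝ P3 :=
  if 0 ≤ m then restrictTotalDegree (Fin 3) ℝ m.toNat else ⊥

/-- The space `{(P₁,P₂,P₃) ∈ 𝒫_{k-1}³ : x P₁ + y P₂ + z P₃ = 0}`. -/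
def traceFreeTriples (k : ℕ) : Submodule ℝ (Fin 3 → P3) where
  carrier := {P | (∀ i, P i ∈ polyLE3 ((k : ℤ) - 1)) ∧
    X 0 * P 0 + X 1 * P 1 + X 2 * P 2 = 0}
  add_mem' := by
    rintro P Q ⟨hP, hP0⟩ ⟨hQ, hQ0⟩
    refine ⟨fun i => Submodule.add_mem _ (hP i) (hQ i), ?_⟩
    simp only [Pi.add_apply]
    linear_combination hP0 + hQ0
  zero_mem' := ⟨fun i => Submodule.zero_mem _, by simp⟩
  smul_mem' := by
    rintro c P ⟨hP, hP0⟩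
    refine ⟨fun i => Submodule.smul_mem _ c (hP i), ?_⟩
    simp only [Pi.smul_apply, smul_eq_C_mul]
    linear_combination (C c : P3) * hP0

def sumLeEquivSumEq (n N : ℕ) :
    {f : Fin n → ℕ // ∑ i, f i ≤ N} ≃ {g : Fin (n + 1) → ℕ // ∑ i, g i = N} where
  toFun f := ⟨Fin.cons (N - ∑ i, f.1 i) f.1, by
    rw [Fin.sum_univ_succ]; simp only [Fin.cons_zero, Fin.cons_succ]; have := f.2; omega⟩
  invFun g := ⟨Fin.tail g.1, by
    have := g.2; rw [Fin.sum_univ_succ] at this; simp only [Fin.tail]; omega⟩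
  left_inv f := by ext; simp
  right_inv g := by
    have hg := g.2
    rw [Fin.sum_univ_succ] at hg
    ext1
    simp only
    rw [show N - ∑ i, Fin.tail g.1 i = g.1 0 by simp only [Fin.tail]; omega, Fin.cons_self_tail]

theorem Finsupp.card_setOf_sum_le (n N : ℕ) :
    Nat.card {s : Fin n →₀ ℕ | (s.sum fun _ e => e) ≤ N} = (N + n).choose n := by
  let e : {s : Fin n →₀ ℕ | (s.sum fun _ e => e) ≤ N} ≃ Sym (Fin (n + 1)) N :=
    (Finsupp.equivFunOnFinite.subtypeEquiv fun s => by
      show (s.sum fun _ e => e) ≤ N ↔ _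
      rw [Finsupp.sum_fintype _ _ fun _ => rfl]; rfl).trans
      ((sumLeEquivSumEq n N).trans (Sym.equivNatSumOfFintype (Fin (n + 1)) N).symm)
  rw [Nat.card_congr e, Nat.card_eq_fintype_card, Sym.card_sym_eq_choose, Fintype.card_fin,
    show n + 1 + N - 1 = N + n by omega, Nat.choose_symm_add]

namespace MvPolynomial

theorem finrank_restrictTotalDegree {R : Type*} [CommSemiring R] [StrongRankCondition R]
    (n N : ℕ) : Module.finrank R (restrictTotalDegree (Fin n) R N) = (N + n).choose n := by
  rw [restrictTotalDegree, Module.finrank_eq_nat_card_basis (basisRestrictSupport R _),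
    Finsupp.card_setOf_sum_le]

section SumXMul

variable (σ R : Type*) [CommSemiring R] [Fintype σ]

def sumXMul : (σ → MvPolynomial σ R) →ₗ[R] MvPolynomial σ R where
  toFun P := ∑ i, X i * P i
  map_add' P Q := by simp only [Pi.add_apply, mul_add, Finset.sum_add_distrib]
  map_smul' c P := by simp only [Pi.smul_apply, mul_smul_comm, Finset.smul_sum, RingHom.id_apply]

def sumXMulOfTotalDegreeLE (m : ℕ) : (σ → restrictTotalDegree σ R m) →ₗ[R] MvPolynomial σ R :=
  sumXMul σ R ∘ₗ (restrictTotalDegree σ R m).subtype.compLeft σ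

@[simp]
theorem sumXMulOfTotalDegreeLE_apply (m : ℕ) (P : σ → restrictTotalDegree σ R m) :
    sumXMulOfTotalDegreeLE σ R m P = ∑ i, X i * (P i : MvPolynomial σ R) := rfl

theorem range_sumXMulOfTotalDegreeLE (m : ℕ) :
    LinearMap.range (sumXMulOfTotalDegreeLE σ R m) =
      restrictSupport R {s | (s.sum fun _ e => e) ≤ m + 1 ∧ s ≠ 0} := by
  classical
  apply le_antisymm
  · rintro _ ⟨P, rfl⟩
    refine Submodule.sum_mem _ fun i _ => ?_
    rw [mem_restrictSupport_iff, support_X_mul]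
    intro _ hs
    obtain ⟨t, ht, rfl⟩ := Finset.mem_map.mp hs
    have htm : t.degree ≤ m := (P i).2 ht
    refine ⟨?_, by simp⟩
    change (Finsupp.single i 1 + t).degree ≤ m + 1
    rw [map_add, Finsupp.degree_single]
    omega
  · rw [restrictSupport_eq_span, Submodule.span_le]
    rintro _ ⟨s, ⟨hs, hs0⟩, rfl⟩
    obtain ⟨i, hi⟩ : ∃ i, s i ≠ 0 := not_forall.mp fun h => hs0 (Finsupp.ext h)
    obtain ⟨t, rfl⟩ : ∃ t, s = Finsupp.single i 1 + t :=
      ⟨s - Finsupp.single i 1, (add_tsub_cancel_of_le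
        (Finsupp.single_le_iff.mpr (Nat.one_le_iff_ne_zero.mpr hi))).symm⟩
    have ht : monomial t (1 : R) ∈ restrictTotalDegree σ R m := by
      rw [restrictTotalDegree, monomial_mem_restrictSupport]
      left
      change t.degree ≤ m
      change (Finsupp.single i 1 + t).degree ≤ m + 1 at hs
      rw [map_add, Finsupp.degree_single] at hs
      omega
    refine ⟨Pi.single i ⟨monomial t 1, ht⟩, ?_⟩
    rw [sumXMulOfTotalDegreeLE_apply,
      Finset.sum_eq_single i (fun j _ hj => by simp [Pi.single_eq_of_ne hj]) (by simp),
      Pi.single_eq_same]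
    change X i * monomial t (1 : R) = monomial (Finsupp.single i 1 + t) 1
    rw [monomial_single_add, pow_one]

end SumXMul

section Finrank

variable (K : Type*) [Field K]

theorem finrank_range_sumXMulOfTotalDegreeLE (n m : ℕ) :
    Module.finrank K (LinearMap.range (sumXMulOfTotalDegreeLE (Fin n) K m)) =
      (m + 1 + n).choose n - 1 := by
  have hdiff : {s : Fin n →₀ ℕ | (s.sum fun _ e => e) ≤ m + 1 ∧ s ≠ 0} =
      {s | (s.sum fun _ e => e) ≤ m + 1} \ {0} := rfl
  rw [range_sumXMulOfTotalDegreeLE, Module.finrank_eq_nat_card_basis (basisRestrictSupport K _),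
    hdiff, Nat.card_coe_set_eq, Set.ncard_sdiff_singleton_of_mem (by simp), ← Nat.card_coe_set_eq,
    Finsupp.card_setOf_sum_le]

theorem finrank_ker_sumXMulOfTotalDegreeLE_add (n m : ℕ) :
    Module.finrank K (LinearMap.ker (sumXMulOfTotalDegreeLE (Fin n) K m)) + (m + 1 + n).choose n =
      n * (m + n).choose n + 1 := by
  have h := LinearMap.finrank_range_add_finrank_ker (sumXMulOfTotalDegreeLE (Fin n) K m)
  rw [finrank_range_sumXMulOfTotalDegreeLE, Module.finrank_pi_fintype] at h
  simp only [finrank_restrictTotalDegree, Finset.sum_const, Finset.card_univ, Fintype.card_fin,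
    smul_eq_mul] at h
  have : 1 ≤ (m + 1 + n).choose n := Nat.choose_pos (by omega)
  omega

end Finrank

end MvPolynomial

theorem polyLE3_natCast (m : ℕ) : polyLE3 m = restrictTotalDegree (Fin 3) ℝ m := by
  simp [polyLE3]

theorem traceFreeTriples_zero : traceFreeTriples 0 = ⊥ := by
  refine (Submodule.eq_bot_iff _).mpr fun P hP => funext fun i => ?_
  simpa [polyLE3] using hP.1 i

theorem traceFreeTriples_succ (m : ℕ) :
    traceFreeTriples (m + 1) = (LinearMap.ker (sumXMulOfTotalDegreeLE (Fin 3) ℝ m)).map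
      ((restrictTotalDegree (Fin 3) ℝ m).subtype.compLeft (Fin 3)) := by
  have hdeg : ((m + 1 : ℕ) : ℤ) - 1 = m := by push_cast; ring
  ext P
  change ((∀ i, P i ∈ polyLE3 _) ∧ _) ↔ _
  rw [hdeg, polyLE3_natCast]
  constructor
  · rintro ⟨hP, hP0⟩
    refine ⟨fun i => ⟨P i, hP i⟩, ?_, rfl⟩
    simpa [Fin.sum_univ_three] using hP0
  · rintro ⟨Q, hQ, rfl⟩
    exact ⟨fun i => (Q i).2, by simpa [Fin.sum_univ_three] using hQ⟩

theorem finrank_traceFreeTriples_succ_add (m : ℕ) :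
    Module.finrank ℝ (traceFreeTriples (m + 1)) + (m + 4).choose 3 = 3 * (m + 3).choose 3 + 1 := by
  rw [traceFreeTriples_succ, ← LinearEquiv.finrank_eq (Submodule.equivMapOfInjective _
    (Function.Injective.comp_left Subtype.val_injective) _)]
  exact finrank_ker_sumXMulOfTotalDegreeLE_add ℝ 3 m

theorem cast_choose_three (N : ℕ) :
    ((N + 3).choose 3 : ℚ) = (N + 1) * (N + 2) * (N + 3) / 6 := by
  rw [← Nat.choose_symm_add, Nat.cast_add_choose]
  push_cast [Nat.factorial_succ]
  field_simp
  ring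

/-- The dimension of `{(P₁,P₂,P₃) ∈ 𝒫_{k-1}³ : x P₁ + y P₂ + z P₃ = 0}` is
`(2k³ + 3k² - 5k)/6`. -/
theorem dim_traceFreeTriples (k : ℕ) :
    (Module.finrank ℝ (traceFreeTriples k) : ℚ) =
      (2 * (k : ℚ) ^ 3 + 3 * (k : ℚ) ^ 2 - 5 * (k : ℚ)) / 6 := by
  rcases k with _ | m
  · rw [traceFreeTriples_zero, finrank_bot]
    simp
  · have h : (Module.finrank ℝ (traceFreeTriples (m + 1)) : ℚ) + ((m + 1 + 3).choose 3 : ℕ) =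
        3 * ((m + 3).choose 3 : ℕ) + 1 := by
      exact_mod_cast finrank_traceFreeTriples_succ_add m
    rw [cast_choose_three, cast_choose_three] at h
    push_cast at h ⊢
    linarith
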